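/- arXiv:2203.00953 — 2 statements merged into one kernel-verified Lean document; each statement's English description precedes it below -/
import Mathlib

section
/- Suppose the heavy-tailed noise assumption III holds and let f be the quantile objective. Let M ∈ ℝ^{d1×d2} have rank at most r and satisfy ‖M − M*‖_F ≥ √(d1 r/n) b1, and let G ∈ ∂f(M) be a sub-gradient. Then, on the event E := { for all M, M₁ ∈ 𝕄_r with M₁ ≠ 0: |f(M+M₁) − f(M) − E[f(M+M₁) − f(M)]| ≤ C₁ √(n d1 r) ‖M₁‖_F } (C₁ > 0 an absolute constant), one has ‖G‖_{F,r} ≤ C n b1⁻¹ ‖M − M*‖_F for some absolute constant C > 0. -/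
open MeasureTheory ProbabilityTheory Matrix Real Set
open scoped ENNReal NNReal ProbabilityTheory

noncomputable section

namespace Paper

/-- Trace inner product `⟨A,B⟩ = tr(AᵀB)`. -/
def minner {m n : Type*} [Fintype m] [Fintype n] (A B : Matrix m n ℝ) : ℝ :=
  ∑ i, ∑ j, A i j * B i j

/-- Frobenius norm. -/
def frob {m n : Type*} [Fintype m] [Fintype n] (A : Matrix m n ℝ) : ℝ :=
  Real.sqrt (∑ i, ∑ j, (A i j) ^ 2)

/-- `ℓ₂`-operator norm of a matrix. -/
def opNorm {m n : Type*} [Fintype m] [Fintype n] (A : Matrix m n ℝ) : ℝ :=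
  sSup {c | ∃ v : n → ℝ, (∑ j, (v j) ^ 2) ≤ 1 ∧ c = Real.sqrt (∑ i, (A.mulVec v i) ^ 2)}

/-- `B` is a best rank-`r` approximation of `A` in Frobenius norm, i.e. `B = SVD_r(A)`. -/
def IsSVDApprox {m n : Type*} [Fintype m] [Fintype n] (r : ℕ) (A B : Matrix m n ℝ) : Prop :=
  B.rank ≤ r ∧ ∀ C : Matrix m n ℝ, C.rank ≤ r → frob (A - B) ≤ frob (A - C)

/-- Truncated Frobenius norm `‖A‖_{F,r} = ‖SVD_r(A)‖_F`. -/
def truncFrob {m n : Type*} [Fintype m] [Fintype n] (r : ℕ) (A : Matrix m n ℝ) : ℝ :=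
  sSup {x | ∃ B : Matrix m n ℝ, IsSVDApprox r A B ∧ x = frob B}

/-- The `k`-th largest singular value `σ_k(A)`, characterized via Eckart–Young:
`σ_k(A) = inf {‖A − B‖ : rank B < k}`. -/
def singVal {m n : Type*} [Fintype m] [Fintype n] (k : ℕ) (A : Matrix m n ℝ) : ℝ :=
  sInf {c | ∃ B : Matrix m n ℝ, B.rank < k ∧ c = opNorm (A - B)}

/-- `G ∈ ∂f(M)`: sub-gradient of a (convex) function on matrices. -/
def IsSubgradient {m n : Type*} [Fintype m] [Fintype n]
    (f : Matrix m n ℝ → ℝ) (M G : Matrix m n ℝ) : Prop :=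
  ∀ N, f M + minner G (N - M) ≤ f N

/-- Dual-phase regularity conditions with parameters `τc > τs > 0`, `μc, μs, Lc, Ls > 0`. -/
def DualPhase {m n : Type*} [Fintype m] [Fintype n] (r : ℕ)
    (f : Matrix m n ℝ → ℝ) (Mstar : Matrix m n ℝ)
    (τc τs μc μs Lc Ls : ℝ) : Prop :=
  τs < τc ∧ 0 < τs ∧ 0 < μc ∧ 0 < μs ∧ 0 < Lc ∧ 0 < Ls ∧
  (∀ M : Matrix m n ℝ, M.rank ≤ r → τc ≤ frob (M - Mstar) →
    (μc * frob (M - Mstar) ≤ f M - f Mstar ∧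
     ∀ G, IsSubgradient f M G → truncFrob r G ≤ Lc)) ∧
  (∀ M : Matrix m n ℝ, M.rank ≤ r → τs ≤ frob (M - Mstar) → frob (M - Mstar) < τc →
    (μs * frob (M - Mstar) ^ 2 ≤ f M - f Mstar ∧
     ∀ G, IsSubgradient f M G → truncFrob r G ≤ Ls * frob (M - Mstar)))

/-- Projection onto the tangent space of the rank-`r` manifold at a point with
thin SVD factors `U, V`. -/
def tangentProj {d1 d2 r : ℕ} (U : Matrix (Fin d1) (Fin r) ℝ) (V : Matrix (Fin d2) (Fin r) ℝ)
    (G : Matrix (Fin d1) (Fin d2) ℝ) : Matrix (Fin d1) (Fin d2) ℝ :=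
  U * Uᵀ * G + G * V * Vᵀ - U * Uᵀ * G * V * Vᵀ

/-- A run of the Riemannian sub-gradient descent (RsGrad) algorithm:
`M (l+1) = SVD_r (M l - η l • P_{T_l}(G l))` for some sub-gradient `G l ∈ ∂f(M l)`,
where `T_l` is the tangent space at `M l` determined by thin-SVD factors `U, V` of `M l`. -/
def IsRsGradRun {d1 d2 : ℕ} (r : ℕ) (f : Matrix (Fin d1) (Fin d2) ℝ → ℝ)
    (M : ℕ → Matrix (Fin d1) (Fin d2) ℝ) (η : ℕ → ℝ) : Prop :=
  (M 0).rank ≤ r ∧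
  ∀ l : ℕ, ∃ (G : Matrix (Fin d1) (Fin d2) ℝ)
      (U : Matrix (Fin d1) (Fin r) ℝ) (V : Matrix (Fin d2) (Fin r) ℝ),
    IsSubgradient f (M l) G ∧
    Uᵀ * U = 1 ∧ Vᵀ * V = 1 ∧
    U * Uᵀ * M l = M l ∧ M l * (V * Vᵀ) = M l ∧
    IsSVDApprox r (M l - η l • tangentProj U V G) (M (l + 1))

/-- All entries of all measurement matrices together with all noise variables,
as one family of real random variables (used to state joint independence). -/
def entriesNoise {Ω : Type*} {d1 d2 n : ℕ} (X : Fin n → Ω → Matrix (Fin d1) (Fin d2) ℝ)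
    (ξ : Fin n → Ω → ℝ) : (Fin n × Fin d1 × Fin d2) ⊕ Fin n → Ω → ℝ :=
  Sum.elim (fun p ω => X p.1 ω p.2.1 p.2.2) ξ

/-- The trace-regression sampling model: all entries of the `X i` and all noise
variables `ξ i` are jointly independent, the entries of the `X i` are standard
Gaussian, and each `ξ i` has law `ν`. -/
def TraceModel {Ω : Type} [MeasureSpace Ω] {d1 d2 n : ℕ}
    (X : Fin n → Ω → Matrix (Fin d1) (Fin d2) ℝ) (ξ : Fin n → Ω → ℝ)
    (ν : Measure ℝ) : Prop :=
  IsProbabilityMeasure (ℙ : Measure Ω) ∧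
  (∀ i a b, Measurable fun ω => X i ω a b) ∧
  (∀ i, Measurable (ξ i)) ∧
  iIndepFun (entriesNoise X ξ) ℙ ∧
  (∀ i a b, Measure.map (fun ω => X i ω a b) ℙ = gaussianReal 0 1) ∧
  (∀ i, Measure.map (ξ i) ℙ = ν)

/-- The response `Y i = ⟨X i, M*⟩ + ξ i`. -/
def obsY {Ω : Type} {d1 d2 n : ℕ} (X : Fin n → Ω → Matrix (Fin d1) (Fin d2) ℝ)
    (ξ : Fin n → Ω → ℝ) (Mstar : Matrix (Fin d1) (Fin d2) ℝ) (i : Fin n) (ω : Ω) : ℝ :=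
  minner (X i ω) Mstar + ξ i ω

/-- Absolute-loss objective `f(M) = Σ_i |Y i − ⟨M, X i⟩|`. -/
def absObj {d1 d2 n : ℕ} (X : Fin n → Matrix (Fin d1) (Fin d2) ℝ) (Y : Fin n → ℝ)
    (M : Matrix (Fin d1) (Fin d2) ℝ) : ℝ :=
  ∑ i, |Y i - minner M (X i)|

/-- Huber loss `ρ_{H,δ}`. -/
def huberLoss (δ x : ℝ) : ℝ := if |x| ≤ δ then x ^ 2 else 2 * δ * |x| - δ ^ 2

/-- Huber objective. -/
def huberObj {d1 d2 n : ℕ} (δ : ℝ) (X : Fin n → Matrix (Fin d1) (Fin d2) ℝ) (Y : Fin n → ℝ)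
    (M : Matrix (Fin d1) (Fin d2) ℝ) : ℝ :=
  ∑ i, huberLoss δ (Y i - minner M (X i))

/-- Quantile loss `ρ_{Q,δ}`. -/
def quantLoss (δ x : ℝ) : ℝ := if 0 ≤ x then δ * x else (δ - 1) * x

/-- Quantile objective. -/
def quantObj {d1 d2 n : ℕ} (δ : ℝ) (X : Fin n → Matrix (Fin d1) (Fin d2) ℝ) (Y : Fin n → ℝ)
    (M : Matrix (Fin d1) (Fin d2) ℝ) : ℝ :=
  ∑ i, quantLoss δ (Y i - minner M (X i))

/-- General objective `f(M) = Σ_i ρ(⟨M, X i⟩ − Y i)` for a loss `ρ`. -/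
def genObj {d1 d2 n : ℕ} (ρ : ℝ → ℝ) (X : Fin n → Matrix (Fin d1) (Fin d2) ℝ) (Y : Fin n → ℝ)
    (M : Matrix (Fin d1) (Fin d2) ℝ) : ℝ :=
  ∑ i, ρ (minner M (X i) - Y i)

/-- Cumulative distribution function of a measure on `ℝ`. -/
def cdfOf (ν : Measure ℝ) (x : ℝ) : ℝ := (ν (Set.Iic x)).toReal

/-- Heavy-tailed noise assumption I. -/
def HeavyTailedI (ν : Measure ℝ) (ε γ b0 b1 : ℝ) (h : ℝ → ℝ) : Prop :=
  IsProbabilityMeasure ν ∧ 0 < ε ∧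
  Integrable (fun x => |x| ^ (1 + ε)) ν ∧
  ν (Set.Iic 0) = 1 / 2 ∧
  γ = ∫ x, |x| ∂ν ∧
  0 < b0 ∧ 0 < b1 ∧
  ν = volume.withDensity (fun x => ENNReal.ofReal (h x)) ∧
  (∀ x : ℝ, |x| ≤ 30 * γ → b0⁻¹ ≤ h x) ∧
  (∀ x : ℝ, h x ≤ b1⁻¹)

/-- Heavy-tailed noise assumption II (for the Huber loss with parameter `δ`). -/
def HeavyTailedII (ν : Measure ℝ) (ε γ δ b0 b1 : ℝ) : Prop :=
  IsProbabilityMeasure ν ∧ 0 < ε ∧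
  Integrable (fun x => |x| ^ (1 + ε)) ν ∧
  (∀ x : ℝ, cdfOf ν x = 1 - cdfOf ν (-x)) ∧
  γ = ∫ x, |x| ∂ν ∧
  0 < δ ∧ 0 < b0 ∧ 0 < b1 ∧
  (∀ x : ℝ, |x| ≤ 24 * γ + 2 * δ → 2 * δ * b0⁻¹ ≤ cdfOf ν (x + δ) - cdfOf ν (x - δ)) ∧
  (∀ x : ℝ, cdfOf ν (x + δ) - cdfOf ν (x - δ) ≤ 2 * δ * b1⁻¹)

/-- Heavy-tailed noise assumption III (for the quantile loss). -/
def HeavyTailedIII (ν : Measure ℝ) (ε γ δ b0 b1 : ℝ) (h : ℝ → ℝ) : Prop :=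
  IsProbabilityMeasure ν ∧ 0 < ε ∧
  Integrable (fun x => |x| ^ (1 + ε)) ν ∧
  δ = cdfOf ν 0 ∧ 0 < δ ∧ δ < 1 ∧
  γ = ∫ x, |x| ∂ν ∧
  0 < b0 ∧ 0 < b1 ∧
  ν = volume.withDensity (fun x => ENNReal.ofReal (h x)) ∧
  (∀ x : ℝ, |x| ≤ 15 * γ * max δ (1 - δ) → b0⁻¹ ≤ h x) ∧
  (∀ x : ℝ, h x ≤ b1⁻¹)




section AuxLemmas

section Aux
variable {m n : Type*} [Fintype m] [Fintype n]

lemma sqsum_nonneg (A : Matrix m n ℝ) : 0 ≤ ∑ i, ∑ j, (A i j) ^ 2 :=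
  Finset.sum_nonneg fun _ _ => Finset.sum_nonneg fun _ _ => sq_nonneg _

lemma frob_nonneg (A : Matrix m n ℝ) : 0 ≤ frob A := Real.sqrt_nonneg _

lemma frob_sq (A : Matrix m n ℝ) : frob A ^ 2 = ∑ i, ∑ j, (A i j) ^ 2 :=
  Real.sq_sqrt (sqsum_nonneg A)

lemma minner_comm (A B : Matrix m n ℝ) : minner A B = minner B A := by
  simp [minner, mul_comm]

lemma minner_self (A : Matrix m n ℝ) : minner A A = frob A ^ 2 := by
  rw [frob_sq]; simp [minner, pow_two]

lemma minner_sub_right (X A B : Matrix m n ℝ) :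
    minner X (A - B) = minner X A - minner X B := by
  simp [minner, Matrix.sub_apply, mul_sub, Finset.sum_sub_distrib]

lemma minner_smul_right (c : ℝ) (A B : Matrix m n ℝ) :
    minner A (c • B) = c * minner A B := by
  simp [minner, Matrix.smul_apply, Finset.mul_sum]
  congr 1; funext i; congr 1; funext j; ring

lemma frob_smul (c : ℝ) (A : Matrix m n ℝ) : frob (c • A) = |c| * frob A := by
  have : ∑ i, ∑ j, ((c • A) i j) ^ 2 = c ^ 2 * ∑ i, ∑ j, (A i j) ^ 2 := by
    simp [Matrix.smul_apply, Finset.mul_sum, mul_pow]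
  rw [frob, this, Real.sqrt_mul (sq_nonneg c), Real.sqrt_sq_eq_abs, frob]

lemma sqsum_sub (X Y : Matrix m n ℝ) :
    ∑ i, ∑ j, ((X - Y) i j) ^ 2
      = (∑ i, ∑ j, (X i j) ^ 2) - 2 * minner X Y + ∑ i, ∑ j, (Y i j) ^ 2 := by
  have h : ∀ i j, ((X - Y) i j) ^ 2 = (X i j)^2 - 2 * (X i j * Y i j) + (Y i j)^2 := by
    intro i j; simp [Matrix.sub_apply]; ring
  simp only [h, Finset.sum_add_distrib, Finset.sum_sub_distrib, minner, Finset.mul_sum]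

lemma frob_eq_zero_iff (A : Matrix m n ℝ) : frob A = 0 ↔ A = 0 := by
  constructor
  · intro h
    have h2 : ∑ i, ∑ j, (A i j) ^ 2 = 0 := by
      have := frob_sq A; rw [h] at this; simpa using this.symm
    ext i j
    have hi := (Finset.sum_eq_zero_iff_of_nonneg
      (fun i _ => Finset.sum_nonneg fun j _ => sq_nonneg (A i j))).mp h2 i (Finset.mem_univ i)
    have hj := (Finset.sum_eq_zero_iff_of_nonneg (fun j _ => sq_nonneg (A i j))).mp hi j
      (Finset.mem_univ j)
    simpa using pow_eq_zero_iff (n := 2) (by norm_num) |>.mp hj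
  · rintro rfl; simp [frob]

lemma rank_smul_le {r : ℕ} [DecidableEq m] (c : ℝ) (B : Matrix m n ℝ) (hB : B.rank ≤ r) :
    (c • B).rank ≤ r := by
  have h1 : c • B = (c • (1 : Matrix m m ℝ)) * B := by
    rw [Matrix.smul_mul, Matrix.one_mul]
  rw [h1]
  exact le_trans (Matrix.rank_mul_le_right _ _) hB

lemma svd_minner {r : ℕ} [DecidableEq m] (G B : Matrix m n ℝ) (hB : IsSVDApprox r G B) :
    minner G B = frob B ^ 2 := by
  obtain ⟨hrank, hopt⟩ := hB
  set p := minner G B with hp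
  set q := ∑ i, ∑ j, (B i j) ^ 2 with hq
  have hq0 : 0 ≤ q := sqsum_nonneg B
  have key : ∀ t : ℝ, -2 * p + q ≤ -2 * (t * p) + t ^ 2 * q := by
    intro t
    have h1 := hopt (t • B) (rank_smul_le t B hrank)
    have h2 : (frob (G - B)) ^ 2 ≤ (frob (G - t • B)) ^ 2 :=
      pow_le_pow_left₀ (frob_nonneg _) h1 2
    rw [frob_sq, frob_sq, sqsum_sub, sqsum_sub] at h2
    have h3 : minner G (t • B) = t * p := minner_smul_right t G B
    have h4 : ∑ i, ∑ j, ((t • B) i j) ^ 2 = t ^ 2 * q := by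
      simp [Matrix.smul_apply, Finset.mul_sum, mul_pow, hq]
    rw [h3, h4] at h2
    linarith
  have hfq : frob B ^ 2 = q := frob_sq B
  rcases eq_or_lt_of_le hq0 with hq0' | hqpos
  · have hq0'' : q = 0 := hq0'.symm
    have h0 := key 0
    have h2 := key 2
    have hp0 : p = 0 := by nlinarith
    rw [hfq, hq0'', hp0]
  · have hpq : p = q := by
      have hne : q ≠ 0 := ne_of_gt hqpos
      have e : -2 * (p / q * p) + (p / q) ^ 2 * q = -(p ^ 2 / q) := by
        field_simp; ring
      have h2 : -2 * p + q ≤ -(p ^ 2 / q) := by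
        have := key (p / q); linarith
      have e2 : p ^ 2 / q * q = p ^ 2 := div_mul_cancel₀ _ hne
      have h3 : (p - q) ^ 2 ≤ 0 := by
        nlinarith [mul_le_mul_of_nonneg_right h2 hqpos.le]
      have h4 : p - q = 0 := by
        have := le_antisymm h3 (sq_nonneg (p - q))
        exact pow_eq_zero_iff (n := 2) (by norm_num) |>.mp this
      linarith
    rw [hfq, hpq]

lemma truncFrob_le {r : ℕ} (G : Matrix m n ℝ) (K : ℝ) (hK : 0 ≤ K)
    (h : ∀ B : Matrix m n ℝ, IsSVDApprox r G B → frob B ≤ K) :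
    truncFrob r G ≤ K := by
  apply Real.sSup_le _ hK
  rintro x ⟨B, hB, rfl⟩
  exact h B hB

lemma quantLoss_sub_le (δ y z : ℝ) :
    quantLoss δ y - quantLoss δ z ≤ (y - z) * (δ - (Set.Iic (0:ℝ)).indicator (fun _ => (1:ℝ)) y) := by
  simp only [quantLoss, Set.indicator_apply, Set.mem_Iic]
  split_ifs <;> nlinarith

lemma abs_quantLoss_sub_le {δ : ℝ} (hδ0 : 0 ≤ δ) (hδ1 : δ ≤ 1) (y z : ℝ) :
    |quantLoss δ y - quantLoss δ z| ≤ |y - z| := by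
  rw [abs_le]
  simp only [quantLoss]
  rcases abs_cases (y - z) with ⟨h, h'⟩ | ⟨h, h'⟩ <;>
    (constructor <;> (split_ifs <;> nlinarith))

lemma abs_quantLoss_le {δ : ℝ} (hδ0 : 0 ≤ δ) (hδ1 : δ ≤ 1) (y : ℝ) :
    |quantLoss δ y| ≤ |y| := by
  have := abs_quantLoss_sub_le hδ0 hδ1 y 0
  simpa [quantLoss] using this

lemma measurable_quantLoss (δ : ℝ) : Measurable (quantLoss δ) := by
  unfold quantLoss
  exact Measurable.ite measurableSet_Ici (measurable_const.mul measurable_id)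
    (measurable_const.mul measurable_id)

end Aux

section NuLemmas
variable {ν : Measure ℝ} [IsProbabilityMeasure ν] {b1 : ℝ} {h : ℝ → ℝ}

lemma cdf_mono (hab : (a : ℝ) ≤ b) : cdfOf ν a ≤ cdfOf ν b :=
  ENNReal.toReal_mono (measure_ne_top ν _) (measure_mono (Set.Iic_subset_Iic.mpr hab))

lemma cdf_diff_le (hb1 : 0 < b1)
    (hν : ν = volume.withDensity fun x => ENNReal.ofReal (h x))
    (hh : ∀ x, h x ≤ b1⁻¹) {a b : ℝ} (hab : a ≤ b) :
    cdfOf ν b - cdfOf ν a ≤ (b - a) / b1 := by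
  have hsplit : ν (Set.Iic b) = ν (Set.Iic a) + ν (Set.Ioc a b) := by
    rw [← Set.Iic_union_Ioc_eq_Iic hab]
    exact measure_union (Set.Iic_disjoint_Ioc le_rfl) measurableSet_Ioc
  have hIoc : ν (Set.Ioc a b) ≤ ENNReal.ofReal ((b - a) / b1) := by
    rw [hν, withDensity_apply _ measurableSet_Ioc]
    calc ∫⁻ x in Set.Ioc a b, ENNReal.ofReal (h x) ∂volume
        ≤ ∫⁻ _ in Set.Ioc a b, ENNReal.ofReal b1⁻¹ ∂volume :=
          lintegral_mono fun x => ENNReal.ofReal_le_ofReal (hh x)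
      _ = ENNReal.ofReal b1⁻¹ * volume (Set.Ioc a b) := setLIntegral_const _ _
      _ = ENNReal.ofReal b1⁻¹ * ENNReal.ofReal (b - a) := by rw [Real.volume_Ioc]
      _ = ENNReal.ofReal ((b - a) / b1) := by
          rw [← ENNReal.ofReal_mul (by positivity), div_eq_inv_mul]
  have hdiff : cdfOf ν b - cdfOf ν a = (ν (Set.Ioc a b)).toReal := by
    rw [cdfOf, cdfOf, hsplit, ENNReal.toReal_add (measure_ne_top ν _) (measure_ne_top ν _)]
    ring
  rw [hdiff]
  exact ENNReal.toReal_le_of_le_ofReal (div_nonneg (by linarith) hb1.le) hIoc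

lemma abs_cdf_diff_le (hb1 : 0 < b1)
    (hν : ν = volume.withDensity fun x => ENNReal.ofReal (h x))
    (hh : ∀ x, h x ≤ b1⁻¹) (u : ℝ) :
    |cdfOf ν u - cdfOf ν 0| ≤ |u| / b1 := by
  rcases le_total 0 u with hu | hu
  · rw [abs_of_nonneg (by linarith [cdf_mono (ν := ν) hu]), abs_of_nonneg hu]
    simpa using cdf_diff_le hb1 hν hh hu
  · rw [abs_of_nonpos (by linarith [cdf_mono (ν := ν) hu]), abs_of_nonpos hu]
    have := cdf_diff_le hb1 hν hh hu
    calc -(cdfOf ν u - cdfOf ν 0) = cdfOf ν 0 - cdfOf ν u := by ring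
      _ ≤ (0 - u) / b1 := this
      _ = -u / b1 := by ring

/-- Key inner integral bound over the noise distribution. -/
lemma quant_integral_diff_le {δ : ℝ} (hb1 : 0 < b1)
    (hδ0 : 0 ≤ δ) (hδ1 : δ ≤ 1) (hδcdf : δ = cdfOf ν 0)
    (hν : ν = volume.withDensity fun x => ENNReal.ofReal (h x))
    (hh : ∀ x, h x ≤ b1⁻¹) (c c' : ℝ) :
    ∫ x, (quantLoss δ (x + c) - quantLoss δ (x + c')) ∂ν ≤ |c - c'| * |c| / b1 := by
  set g := fun x => quantLoss δ (x + c) - quantLoss δ (x + c') with hg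
  have hgmeas : Measurable g :=
    ((measurable_quantLoss δ).comp (measurable_id.add_const c)).sub
      ((measurable_quantLoss δ).comp (measurable_id.add_const c'))
  have hgint : Integrable g ν := by
    refine Integrable.mono' (integrable_const |c - c'|) hgmeas.aestronglyMeasurable ?_
    filter_upwards with x
    have := abs_quantLoss_sub_le hδ0 hδ1 (x + c) (x + c')
    simpa using this
  have hptwise : ∀ x, g x ≤ (c - c') * δ - (c - c') * (Set.Iic (-c)).indicator (fun _ => (1:ℝ)) x := by
    intro x
    have := quantLoss_sub_le δ (x + c) (x + c')
    have harg : (x + c) - (x + c') = c - c' := by ring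
    rw [harg] at this
    have hind : (Set.Iic (0:ℝ)).indicator (fun _ => (1:ℝ)) (x + c)
        = (Set.Iic (-c)).indicator (fun _ => (1:ℝ)) x := by
      simp only [Set.indicator_apply, Set.mem_Iic]
      congr 1
      simp only [eq_iff_iff]
      constructor <;> intro hle <;> linarith
    rw [hind] at this
    simp only [hg]
    exact le_trans this (le_of_eq (by ring))
  have hRint : Integrable (fun x => (c - c') * δ - (c - c') * (Set.Iic (-c)).indicator (fun _ => (1:ℝ)) x) ν := by
    apply Integrable.sub (integrable_const _)
    exact ((integrable_const (1:ℝ)).indicator measurableSet_Iic).const_mul _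
  have hle : ∫ x, g x ∂ν ≤ ∫ x, ((c - c') * δ - (c - c') * (Set.Iic (-c)).indicator (fun _ => (1:ℝ)) x) ∂ν :=
    integral_mono hgint hRint hptwise
  have hInd : ∫ x, (Set.Iic (-c)).indicator (fun _ => (1:ℝ)) x ∂ν = cdfOf ν (-c) := by
    rw [integral_indicator_const (1:ℝ) measurableSet_Iic]
    simp [cdfOf, Measure.real]
  have hRval : ∫ x, ((c - c') * δ - (c - c') * (Set.Iic (-c)).indicator (fun _ => (1:ℝ)) x) ∂ν
      = (c - c') * (δ - cdfOf ν (-c)) := by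
    rw [integral_sub (integrable_const _)
      (((integrable_const (1:ℝ)).indicator measurableSet_Iic).const_mul _),
      integral_const, integral_const_mul, hInd]
    simp [mul_sub]
  calc ∫ x, g x ∂ν ≤ (c - c') * (δ - cdfOf ν (-c)) := by rw [← hRval]; exact hle
    _ ≤ |(c - c') * (δ - cdfOf ν (-c))| := le_abs_self _
    _ = |c - c'| * |cdfOf ν 0 - cdfOf ν (-c)| := by rw [abs_mul, hδcdf, abs_sub_comm]
    _ ≤ |c - c'| * (|(-c)| / b1) := by
        apply mul_le_mul_of_nonneg_left _ (abs_nonneg _)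
        rw [abs_sub_comm]
        exact abs_cdf_diff_le hb1 hν hh (-c)
    _ = |c - c'| * |c| / b1 := by rw [abs_neg]; ring

end NuLemmas

lemma gauss01_density : gaussianReal 0 1 = volume.withDensity (gaussianPDF 0 1) :=
  gaussianReal_of_var_ne_zero 0 one_ne_zero

lemma pdf01 (x : ℝ) : gaussianPDFReal 0 1 x = (√(2 * π))⁻¹ * rexp (-x ^ 2 / 2) := by
  simp [gaussianPDFReal]

lemma sqrt_two_pi_ge_two : (2:ℝ) ≤ √(2 * π) := by
  nlinarith [Real.sq_sqrt (show (0:ℝ) ≤ 2 * π by positivity), Real.sqrt_nonneg (2 * π),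
    Real.pi_gt_three]

lemma pdf_poly_bound (x : ℝ) :
    gaussianPDFReal 0 1 x * (1 + x ^ 2) ≤ 4 * rexp (-(4:ℝ)⁻¹ * x ^ 2) := by
  rw [pdf01]
  have hinv : (√(2 * π))⁻¹ ≤ 2⁻¹ := by
    apply inv_anti₀ (by norm_num) sqrt_two_pi_ge_two
  have hinv0 : (0:ℝ) ≤ (√(2 * π))⁻¹ := by positivity
  have hE : rexp (x ^ 2 / 4) * rexp (-x ^ 2 / 2) = rexp (-(4:ℝ)⁻¹ * x ^ 2) := by
    rw [← Real.exp_add]; congr 1; ring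
  have hE2 : rexp (-x ^ 2 / 2) ≤ rexp (-(4:ℝ)⁻¹ * x ^ 2) :=
    Real.exp_le_exp.mpr (by nlinarith [sq_nonneg x])
  have hx2 : x ^ 2 / 4 ≤ rexp (x ^ 2 / 4) := by
    linarith [Real.add_one_le_exp (x ^ 2 / 4)]
  have hxE : x ^ 2 * rexp (-x ^ 2 / 2) ≤ 4 * rexp (-(4:ℝ)⁻¹ * x ^ 2) := by
    have h4 : x ^ 2 * rexp (-x ^ 2 / 2) ≤ 4 * (rexp (x ^ 2 / 4) * rexp (-x ^ 2 / 2)) := by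
      have := Real.exp_pos (-x ^ 2 / 2)
      nlinarith
    rw [hE] at h4; exact h4
  have hEpos := Real.exp_pos (-x ^ 2 / 2)
  have hEpos2 := Real.exp_pos (-(4:ℝ)⁻¹ * x ^ 2)
  nlinarith [mul_le_mul hinv hxE (by positivity) (by norm_num),
    mul_le_mul hinv hE2 (by positivity) (by norm_num)]

lemma integrable_dom : Integrable (fun x : ℝ => 4 * rexp (-(4:ℝ)⁻¹ * x ^ 2)) volume :=
  (integrable_exp_neg_mul_sq (by norm_num : (0:ℝ) < 4⁻¹)).const_mul 4

lemma toReal_pdf (x : ℝ) : (gaussianPDF 0 1 x).toReal = gaussianPDFReal 0 1 x :=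
  ENNReal.toReal_ofReal (gaussianPDFReal_nonneg 0 1 x)

lemma gauss_integrable_id : Integrable (fun x : ℝ => x) (gaussianReal 0 1) := by
  rw [gauss01_density, integrable_withDensity_iff (measurable_gaussianPDF 0 1)
    (ae_of_all _ fun x => ENNReal.ofReal_lt_top)]
  refine Integrable.mono' integrable_dom ?_ (ae_of_all _ fun x => ?_)
  · exact (measurable_id.mul ((measurable_gaussianPDF 0 1).ennreal_toReal)).aestronglyMeasurable
  · have hb := pdf_poly_bound x
    have h0 := gaussianPDFReal_nonneg 0 1 x
    rw [toReal_pdf, Real.norm_eq_abs, abs_mul]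
    have hx : |x| ≤ 1 + x ^ 2 := by nlinarith [sq_nonneg (|x| - 1), sq_abs x]
    calc |x| * |gaussianPDFReal 0 1 x| = gaussianPDFReal 0 1 x * |x| := by
          rw [abs_of_nonneg h0]; ring
      _ ≤ gaussianPDFReal 0 1 x * (1 + x ^ 2) := by
          apply mul_le_mul_of_nonneg_left hx h0
      _ ≤ 4 * rexp (-(4:ℝ)⁻¹ * x ^ 2) := hb

lemma gauss_integrable_sq : Integrable (fun x : ℝ => x ^ 2) (gaussianReal 0 1) := by
  rw [gauss01_density, integrable_withDensity_iff (measurable_gaussianPDF 0 1)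
    (ae_of_all _ fun x => ENNReal.ofReal_lt_top)]
  refine Integrable.mono' integrable_dom ?_ (ae_of_all _ fun x => ?_)
  · exact ((measurable_id.pow_const 2).mul
      ((measurable_gaussianPDF 0 1).ennreal_toReal)).aestronglyMeasurable
  · have hb := pdf_poly_bound x
    have h0 := gaussianPDFReal_nonneg 0 1 x
    rw [toReal_pdf, Real.norm_eq_abs, abs_mul, abs_of_nonneg (sq_nonneg x), abs_of_nonneg h0]
    nlinarith [sq_nonneg x]

lemma gauss_mean : ∫ x, x ∂(gaussianReal 0 1) = 0 := by
  have h1 : ((⟨(-1:ℝ) ^ 2, sq_nonneg _⟩ : ℝ≥0) * 1) = (1 : ℝ≥0) := by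
    ext; norm_num
  have hmap : (gaussianReal 0 1).map (fun x => (-1) * x) = gaussianReal 0 1 := by
    have := gaussianReal_map_const_mul (μ := 0) (v := 1) (-1)
    convert this using 2
    · simp
    · ext; simp
  have h2 : ∫ x, x ∂(gaussianReal 0 1) = ∫ x, (-1) * x ∂(gaussianReal 0 1) := by
    conv_lhs => rw [← hmap]
    exact integral_map (f := fun x => x) (measurable_const_mul (-1)).aemeasurable
      aestronglyMeasurable_id
  have h3 : ∫ x, (-1 : ℝ) * x ∂(gaussianReal 0 1) = - ∫ x, x ∂(gaussianReal 0 1) := by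
    simp only [neg_one_mul]
    exact integral_neg _
  linarith [h2, h3]

lemma gauss_sq_le : ∫ x, x ^ 2 ∂(gaussianReal 0 1) ≤ 16 := by
  have hmeasNN : Measurable fun x : ℝ => (gaussianPDFReal 0 1 x).toNNReal :=
    (measurable_gaussianPDFReal 0 1).real_toNNReal
  have hdens : gaussianReal 0 1
      = volume.withDensity (fun x => ((gaussianPDFReal 0 1 x).toNNReal : ℝ≥0∞)) := by
    rw [gauss01_density]; rfl
  rw [hdens, integral_withDensity_eq_integral_smul hmeasNN]
  have hpt : ∀ x : ℝ, (gaussianPDFReal 0 1 x).toNNReal • x ^ 2 ≤ 4 * rexp (-(4:ℝ)⁻¹ * x ^ 2) := by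
    intro x
    have h0 := gaussianPDFReal_nonneg 0 1 x
    have hb := pdf_poly_bound x
    rw [NNReal.smul_def, smul_eq_mul, Real.coe_toNNReal _ h0]
    nlinarith [sq_nonneg x]
  have hint : Integrable (fun x : ℝ => (gaussianPDFReal 0 1 x).toNNReal • x ^ 2) volume := by
    refine Integrable.mono' integrable_dom ?_ (ae_of_all _ fun x => ?_)
    · exact (hmeasNN.coe_nnreal_real.mul (measurable_id.pow_const 2)).aestronglyMeasurable
    · have h0 := gaussianPDFReal_nonneg 0 1 x
      rw [NNReal.smul_def, smul_eq_mul, Real.norm_eq_abs, abs_of_nonneg (by positivity)]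
      have := hpt x
      rwa [NNReal.smul_def, smul_eq_mul] at this
  calc ∫ x, (gaussianPDFReal 0 1 x).toNNReal • x ^ 2 ∂volume
      ≤ ∫ x, 4 * rexp (-(4:ℝ)⁻¹ * x ^ 2) ∂volume :=
        integral_mono hint integrable_dom hpt
    _ = 4 * √(π / 4⁻¹) := by
        rw [integral_const_mul, integral_gaussian]
    _ ≤ 16 := by
        have h16 : √(π / 4⁻¹) ≤ √16 := Real.sqrt_le_sqrt (by rw [div_inv_eq_mul]; nlinarith [Real.pi_le_four])
        rw [show (16:ℝ) = 4 ^ 2 by norm_num, Real.sqrt_sq (by norm_num)] at h16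
        linarith

section Moment
variable {Ω : Type} [MeasureSpace Ω] [IsProbabilityMeasure (ℙ : Measure Ω)]
variable {ι : Type} [Fintype ι]

lemma gauss_facts (Z : Ω → ℝ) (hm : Measurable Z)
    (hlaw : Measure.map Z ℙ = gaussianReal 0 1) :
    Integrable Z ℙ ∧ Integrable (fun ω => Z ω ^ 2) ℙ ∧
      (∫ ω, Z ω ∂ℙ) = 0 ∧ (∫ ω, Z ω ^ 2 ∂ℙ) ≤ 16 := by
  have h1 : Integrable Z ℙ := by
    have := (integrable_map_measure (f := Z) (g := fun x : ℝ => x)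
      aestronglyMeasurable_id hm.aemeasurable).mp (by rw [hlaw]; exact gauss_integrable_id)
    exact this
  have h2 : Integrable (fun ω => Z ω ^ 2) ℙ := by
    have := (integrable_map_measure (f := Z) (g := fun x : ℝ => x ^ 2)
      (measurable_id.pow_const 2).aestronglyMeasurable hm.aemeasurable).mp
      (by rw [hlaw]; exact gauss_integrable_sq)
    exact this
  have h3 : (∫ ω, Z ω ∂ℙ) = 0 := by
    have h := integral_map (μ := (ℙ : Measure Ω)) (φ := Z) (f := fun x : ℝ => x)
      hm.aemeasurable (by rw [hlaw]; exact aestronglyMeasurable_id)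
    rw [hlaw, gauss_mean] at h
    exact h.symm
  have h4 : (∫ ω, Z ω ^ 2 ∂ℙ) ≤ 16 := by
    have h := integral_map (μ := (ℙ : Measure Ω)) (φ := Z) (f := fun x : ℝ => x ^ 2)
      hm.aemeasurable (by rw [hlaw]; exact (measurable_id.pow_const 2).aestronglyMeasurable)
    rw [hlaw] at h
    rw [← h]; exact gauss_sq_le
  exact ⟨h1, h2, h3, h4⟩

lemma lin_moment (Z : ι → Ω → ℝ) (c : ι → ℝ)
    (hmeas : ∀ e, Measurable (Z e))
    (hlaw : ∀ e, Measure.map (Z e) ℙ = gaussianReal 0 1)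
    (hindep : ∀ e e', e ≠ e' → IndepFun (Z e) (Z e') ℙ) :
    Integrable (fun ω => ∑ e, c e * Z e ω) ℙ ∧
    Integrable (fun ω => (∑ e, c e * Z e ω) ^ 2) ℙ ∧
    (∫ ω, (∑ e, c e * Z e ω) ^ 2 ∂ℙ) ≤ 16 * ∑ e, (c e) ^ 2 := by
  have hfacts := fun e => gauss_facts (Z e) (hmeas e) (hlaw e)
  have hint1 : ∀ e, Integrable (Z e) ℙ := fun e => (hfacts e).1
  have hint2 : ∀ e, Integrable (fun ω => Z e ω ^ 2) ℙ := fun e => (hfacts e).2.1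
  have hmean : ∀ e, (∫ ω, Z e ω ∂ℙ) = 0 := fun e => (hfacts e).2.2.1
  have hsq : ∀ e, (∫ ω, Z e ω ^ 2 ∂ℙ) ≤ 16 := fun e => (hfacts e).2.2.2
  have hprod : ∀ e e', Integrable (fun ω => (c e * Z e ω) * (c e' * Z e' ω)) ℙ := by
    intro e e'
    by_cases hee : e = e'
    · subst hee
      exact ((hint2 e).const_mul ((c e) ^ 2)).congr (ae_of_all _ fun ω => by ring)
    · have hmul := (hindep e e' hee).integrable_mul (hint1 e) (hint1 e')
      exact (hmul.const_mul (c e * c e')).congr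
        (ae_of_all _ fun ω => by simp [Pi.mul_apply]; ring)
  have hoff : ∀ e e', e ≠ e' → (∫ ω, (c e * Z e ω) * (c e' * Z e' ω) ∂ℙ) = 0 := by
    intro e e' hee
    have hre : (fun ω => (c e * Z e ω) * (c e' * Z e' ω))
        = fun ω => (c e * c e') * (Z e ω * Z e' ω) := funext fun ω => by ring
    rw [hre, integral_const_mul]
    have hmm := (hindep e e' hee).integral_mul_eq_mul_integral (hint1 e).1 (hint1 e').1
    calc c e * c e' * ∫ ω, Z e ω * Z e' ω ∂ℙ
        = c e * c e' * ∫ ω, (Z e * Z e') ω ∂ℙ := rfl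
      _ = c e * c e' * ((∫ ω, Z e ω ∂ℙ) * ∫ ω, Z e' ω ∂ℙ) := by rw [hmm]
      _ = 0 := by rw [hmean e]; ring
  have hsq_expand : (fun ω => (∑ e, c e * Z e ω) ^ 2)
      = fun ω => ∑ e, ∑ e', (c e * Z e ω) * (c e' * Z e' ω) := by
    funext ω
    rw [sq, Finset.sum_mul_sum]
  refine ⟨integrable_finset_sum _ fun e _ => (hint1 e).const_mul (c e), ?_, ?_⟩
  · rw [hsq_expand]
    exact integrable_finset_sum _ fun e _ => integrable_finset_sum _ fun e' _ => hprod e e'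
  · rw [hsq_expand, integral_finset_sum _ fun e _ =>
      integrable_finset_sum _ fun e' _ => hprod e e']
    have hrows : ∀ e, (∫ ω, ∑ e', (c e * Z e ω) * (c e' * Z e' ω) ∂ℙ)
        ≤ 16 * c e ^ 2 := by
      intro e
      rw [integral_finset_sum _ fun e' _ => hprod e e']
      rw [Finset.sum_eq_single e (fun e' _ hne => hoff e e' (fun hc => hne hc.symm))
        (fun habs => absurd (Finset.mem_univ e) habs)]
      have hre : (fun ω => (c e * Z e ω) * (c e * Z e ω)) = fun ω => (c e) ^ 2 * Z e ω ^ 2 :=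
        funext fun ω => by ring
      rw [hre, integral_const_mul]
      calc (c e) ^ 2 * ∫ ω, Z e ω ^ 2 ∂ℙ ≤ (c e) ^ 2 * 16 :=
            mul_le_mul_of_nonneg_left (hsq e) (sq_nonneg _)
        _ = 16 * c e ^ 2 := by ring
    calc (∑ e, ∫ ω, ∑ e', (c e * Z e ω) * (c e' * Z e' ω) ∂ℙ)
        ≤ ∑ e, 16 * c e ^ 2 := Finset.sum_le_sum fun e _ => hrows e
      _ = 16 * ∑ e, c e ^ 2 := by rw [Finset.mul_sum]

end Moment

end AuxLemmas


lemma sample_bound_abstract {Ω : Type} [MeasureSpace Ω] [IsProbabilityMeasure (ℙ : Measure Ω)]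
    {ι : Type} [Fintype ι] (Z : ι → Ω → ℝ) (ξi : Ω → ℝ) (ν : Measure ℝ)
    [IsProbabilityMeasure ν]
    (hZm : ∀ e, Measurable (Z e)) (hξm : Measurable ξi)
    (hlaw : ∀ e, Measure.map (Z e) ℙ = gaussianReal 0 1)
    (hZindep : ∀ e e', e ≠ e' → IndepFun (Z e) (Z e') ℙ)
    (hVξ : IndepFun (fun ω (e : ι) => Z e ω) ξi ℙ)
    (hξlaw : Measure.map ξi ℙ = ν)
    {b1 δ : ℝ} {h : ℝ → ℝ} (hb1 : 0 < b1) (hδ0 : 0 ≤ δ) (hδ1 : δ ≤ 1)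
    (hδcdf : δ = cdfOf ν 0)
    (hν : ν = volume.withDensity fun x => ENNReal.ofReal (h x)) (hh : ∀ x, h x ≤ b1⁻¹)
    (cA cP : ι → ℝ) :
    (∫ ω, (quantLoss δ (ξi ω + ((∑ e, cA e * Z e ω) - ∑ e, cP e * Z e ω))
       - quantLoss δ (ξi ω + ∑ e, cA e * Z e ω)) ∂ℙ)
      ≤ (24 * (∑ e, cP e ^ 2) + 8 * (∑ e, cA e ^ 2)) / b1 := by
  classical
  set lA : (ι → ℝ) → ℝ := fun t => ∑ e, cA e * t e with hlA
  set lP : (ι → ℝ) → ℝ := fun t => ∑ e, cP e * t e with hlP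
  set V : Ω → (ι → ℝ) := fun ω e => Z e ω with hV
  have hVm : Measurable V := measurable_pi_lambda _ fun e => hZm e
  have hlAm : Measurable lA := Finset.measurable_sum _ fun e _ =>
    (measurable_pi_apply e).const_mul _
  have hlPm : Measurable lP := Finset.measurable_sum _ fun e _ =>
    (measurable_pi_apply e).const_mul _
  have hAmom := lin_moment Z cA hZm hlaw hZindep
  have hPmom := lin_moment Z cP hZm hlaw hZindep
  set g : (ι → ℝ) × ℝ → ℝ := fun p =>
    quantLoss δ (p.2 + (lA p.1 - lP p.1)) - quantLoss δ (p.2 + lA p.1) with hg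
  have hgm : Measurable g := by
    apply Measurable.sub
    · exact (measurable_quantLoss δ).comp
        (measurable_snd.add ((hlAm.comp measurable_fst).sub (hlPm.comp measurable_fst)))
    · exact (measurable_quantLoss δ).comp (measurable_snd.add (hlAm.comp measurable_fst))
  set μV : Measure (ι → ℝ) := Measure.map V ℙ with hμV
  haveI : IsProbabilityMeasure μV := Measure.isProbabilityMeasure_map hVm.aemeasurable
  have hpm : Measurable (fun ω => (V ω, ξi ω)) := hVm.prodMk hξm
  have hpairlaw : Measure.map (fun ω => (V ω, ξi ω)) ℙ = μV.prod ν := by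
    have := (indepFun_iff_map_prod_eq_prod_map_map hVm.aemeasurable hξm.aemeasurable).mp hVξ
    rw [this, hξlaw]
  have hLHS : (fun ω => quantLoss δ (ξi ω + ((∑ e, cA e * Z e ω) - ∑ e, cP e * Z e ω))
       - quantLoss δ (ξi ω + ∑ e, cA e * Z e ω)) = fun ω => g (V ω, ξi ω) := rfl
  rw [hLHS]
  have h1 : (∫ ω, g (V ω, ξi ω) ∂ℙ) = ∫ p, g p ∂(μV.prod ν) := by
    rw [← hpairlaw, integral_map hpm.aemeasurable
      (by rw [hpairlaw]; exact hgm.aestronglyMeasurable)]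
  rw [h1]
  -- integrability of g on the product
  have hgbd : ∀ p : (ι → ℝ) × ℝ, |g p| ≤ |lP p.1| := by
    intro p
    have hb := abs_quantLoss_sub_le hδ0 hδ1 (p.2 + (lA p.1 - lP p.1)) (p.2 + lA p.1)
    calc |g p| ≤ |(p.2 + (lA p.1 - lP p.1)) - (p.2 + lA p.1)| := hb
      _ = |lP p.1| := by
          rw [show (p.2 + (lA p.1 - lP p.1)) - (p.2 + lA p.1) = -(lP p.1) by ring, abs_neg]
  have hPint_Ω : Integrable (fun ω => lP (V ω)) ℙ := hPmom.1
  have hPint_μV : Integrable lP μV :=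
    (integrable_map_measure hlPm.aestronglyMeasurable hVm.aemeasurable).mpr hPint_Ω
  have hfst : Measure.map Prod.fst (μV.prod ν) = μV := by
    rw [← Measure.fst]; exact Measure.fst_prod
  have habsP : Integrable (fun p : (ι → ℝ) × ℝ => |lP p.1|) (μV.prod ν) := by
    have h3 : Integrable (fun t => |lP t|) (Measure.map Prod.fst (μV.prod ν)) := by
      rw [hfst]; exact hPint_μV.abs
    exact (integrable_map_measure (by rw [hfst]; exact hlPm.abs.aestronglyMeasurable)
      measurable_fst.aemeasurable).mp h3
  have hgint : Integrable g (μV.prod ν) :=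
    Integrable.mono' habsP hgm.aestronglyMeasurable
      (ae_of_all _ fun p => by rw [Real.norm_eq_abs]; exact hgbd p)
  rw [integral_prod _ hgint]
  -- the dominating function on the first coordinate
  set φ : (ι → ℝ) → ℝ := fun t => (3/2 * (lP t) ^ 2 + 1/2 * (lA t) ^ 2) / b1 with hφ
  have hφm : Measurable φ :=
    (((hlPm.pow_const 2).const_mul _).add ((hlAm.pow_const 2).const_mul _)).div_const _
  have hφint_Ω : Integrable (fun ω => φ (V ω)) ℙ := by
    have := ((hPmom.2.1.const_mul (3/2)).add (hAmom.2.1.const_mul (1/2))).div_const b1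
    exact this
  have hφint : Integrable φ μV :=
    (integrable_map_measure hφm.aestronglyMeasurable hVm.aemeasurable).mpr hφint_Ω
  have hinner : ∀ t : ι → ℝ, (∫ x, g (t, x) ∂ν) ≤ φ t := by
    intro t
    have hq := quant_integral_diff_le (ν := ν) hb1 hδ0 hδ1 hδcdf hν hh
      (lA t - lP t) (lA t)
    have heq : (fun x => g (t, x))
        = fun x => quantLoss δ (x + (lA t - lP t)) - quantLoss δ (x + lA t) := rfl
    rw [heq]
    refine hq.trans ?_
    have hnum : |lA t - lP t - lA t| * |lA t - lP t| ≤ 3/2 * (lP t) ^ 2 + 1/2 * (lA t) ^ 2 := by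
      rw [show lA t - lP t - lA t = -(lP t) by ring, abs_neg]
      have h2 : |lA t - lP t| ≤ |lA t| + |lP t| := abs_sub _ _
      nlinarith [abs_nonneg (lP t), abs_nonneg (lA t), sq_abs (lP t), sq_abs (lA t),
        sq_nonneg (|lA t| - |lP t|)]
    rw [hφ, div_eq_mul_inv, div_eq_mul_inv]
    exact mul_le_mul_of_nonneg_right hnum (inv_nonneg.mpr hb1.le)
  calc (∫ t, ∫ x, g (t, x) ∂ν ∂μV) ≤ ∫ t, φ t ∂μV :=
        integral_mono (hgint.integral_prod_left) hφint hinner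
    _ = ∫ ω, φ (V ω) ∂ℙ := by
        rw [hμV, integral_map hVm.aemeasurable hφm.aestronglyMeasurable]
    _ ≤ (24 * (∑ e, cP e ^ 2) + 8 * (∑ e, cA e ^ 2)) / b1 := by
        have hexp : (∫ ω, φ (V ω) ∂ℙ)
            = (3/2 * (∫ ω, (lP (V ω)) ^ 2 ∂ℙ) + 1/2 * (∫ ω, (lA (V ω)) ^ 2 ∂ℙ)) / b1 := by
          rw [show (fun ω => φ (V ω)) = fun ω =>
            (3/2 * (lP (V ω)) ^ 2 + 1/2 * (lA (V ω)) ^ 2) / b1 from rfl]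
          rw [integral_div, integral_add (hPmom.2.1.const_mul (3/2)) (hAmom.2.1.const_mul (1/2)),
            integral_const_mul, integral_const_mul]
        rw [hexp, div_eq_mul_inv, div_eq_mul_inv]
        apply mul_le_mul_of_nonneg_right _ (inv_nonneg.mpr hb1.le)
        have hP16 := hPmom.2.2
        have hA16 := hAmom.2.2
        linarith


section MatrixModel

lemma minner_sum_prod {m' n' : Type*} [Fintype m'] [Fintype n'] (M Q : Matrix m' n' ℝ) :
    (∑ e : m' × n', Q e.1 e.2 * M e.1 e.2) = minner M Q := by
  rw [minner, Fintype.sum_prod_type]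
  exact Finset.sum_congr rfl fun a _ => Finset.sum_congr rfl fun b _ => mul_comm _ _

lemma frob_sq_prod {m' n' : Type*} [Fintype m'] [Fintype n'] (A : Matrix m' n' ℝ) :
    (∑ e : m' × n', A e.1 e.2 ^ 2) = frob A ^ 2 := by
  rw [frob_sq, Fintype.sum_prod_type]

lemma frob_sub_comm {m' n' : Type*} [Fintype m'] [Fintype n'] (A B : Matrix m' n' ℝ) :
    frob (A - B) = frob (B - A) := by
  rw [frob, frob]
  congr 1
  exact Finset.sum_congr rfl fun i _ => Finset.sum_congr rfl fun j _ => by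
    rw [Matrix.sub_apply, Matrix.sub_apply]; ring

lemma indep_V_xi {Ω : Type} [MeasureSpace Ω] {d1 d2 n : ℕ}
    {X : Fin n → Ω → Matrix (Fin d1) (Fin d2) ℝ} {ξ : Fin n → Ω → ℝ}
    (hXm : ∀ i a b, Measurable fun ω => X i ω a b) (hξm : ∀ i, Measurable (ξ i))
    (hind : iIndepFun (entriesNoise X ξ) ℙ) (i : Fin n) :
    IndepFun (fun ω (e : Fin d1 × Fin d2) => X i ω e.1 e.2) (ξ i) ℙ := by
  classical
  have hFm : ∀ k, Measurable (entriesNoise X ξ k) := by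
    rintro (⟨j, a, b⟩ | j)
    · exact hXm j a b
    · exact hξm j
  set S : Finset ((Fin n × Fin d1 × Fin d2) ⊕ Fin n) :=
    Finset.univ.image (fun e : Fin d1 × Fin d2 => Sum.inl (i, e.1, e.2)) with hS
  set T : Finset ((Fin n × Fin d1 × Fin d2) ⊕ Fin n) := {Sum.inr i} with hT
  have hdisj : Disjoint S T := by
    rw [Finset.disjoint_left]
    intro k hkS hkT
    rw [hS] at hkS
    rw [hT, Finset.mem_singleton] at hkT
    obtain ⟨e, -, rfl⟩ := Finset.mem_image.mp hkS
    exact absurd hkT (by simp)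
  have H := hind.indepFun_finset S T hdisj hFm
  have hmem : ∀ e : Fin d1 × Fin d2,
      (Sum.inl (i, e.1, e.2) : (Fin n × Fin d1 × Fin d2) ⊕ Fin n) ∈ S := by
    intro e
    rw [hS, Finset.mem_image]
    exact ⟨e, Finset.mem_univ e, rfl⟩
  have hTmem : (Sum.inr i : (Fin n × Fin d1 × Fin d2) ⊕ Fin n) ∈ T := by
    rw [hT]; exact Finset.mem_singleton_self _
  let φ : ((k : S) → ℝ) → (Fin d1 × Fin d2 → ℝ) :=
    fun g e => g ⟨Sum.inl (i, e.1, e.2), hmem e⟩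
  let ψ : ((k : T) → ℝ) → ℝ := fun g => g ⟨Sum.inr i, hTmem⟩
  have hφ : Measurable φ := measurable_pi_lambda _ fun e => measurable_pi_apply _
  have hψ : Measurable ψ := measurable_pi_apply _
  exact H.comp hφ hψ

lemma minner_X_moment {Ω : Type} [MeasureSpace Ω] [IsProbabilityMeasure (ℙ : Measure Ω)]
    {d1 d2 : ℕ} (W : Ω → Matrix (Fin d1) (Fin d2) ℝ)
    (hWm : ∀ a b, Measurable fun ω => W ω a b)
    (hlaw : ∀ a b, Measure.map (fun ω => W ω a b) ℙ = gaussianReal 0 1)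
    (hindep : ∀ e e' : Fin d1 × Fin d2, e ≠ e' →
      IndepFun (fun ω => W ω e.1 e.2) (fun ω => W ω e'.1 e'.2) ℙ)
    (Q : Matrix (Fin d1) (Fin d2) ℝ) :
    Measurable (fun ω => minner (W ω) Q) ∧
    Integrable (fun ω => minner (W ω) Q) ℙ ∧
    Integrable (fun ω => (minner (W ω) Q) ^ 2) ℙ ∧
    (∫ ω, (minner (W ω) Q) ^ 2 ∂ℙ) ≤ 16 * frob Q ^ 2 := by
  have hbrp : ∀ ω, minner (W ω) Q = ∑ e : Fin d1 × Fin d2, Q e.1 e.2 * W ω e.1 e.2 :=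
    fun ω => (minner_sum_prod (W ω) Q).symm
  have hlm := lin_moment (fun (e : Fin d1 × Fin d2) ω => W ω e.1 e.2) (fun e => Q e.1 e.2)
    (fun e => hWm e.1 e.2) (fun e => hlaw e.1 e.2) hindep
  simp only [hbrp]
  refine ⟨?_, by simpa using hlm.1, by simpa using hlm.2.1, (by simpa using hlm.2.2 :
    (∫ ω, (∑ e : Fin d1 × Fin d2, Q e.1 e.2 * W ω e.1 e.2) ^ 2 ∂ℙ)
      ≤ 16 * ∑ e : Fin d1 × Fin d2, Q e.1 e.2 ^ 2).trans (le_of_eq ?_)⟩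
  · exact Finset.measurable_sum _ fun e _ => ((hWm e.1 e.2).const_mul _)
  · rw [frob_sq_prod]

/-- Matrix-level per-sample expectation bound. -/
lemma sample_bound {Ω : Type} [MeasureSpace Ω] {d1 d2 n : ℕ}
    {X : Fin n → Ω → Matrix (Fin d1) (Fin d2) ℝ} {ξ : Fin n → Ω → ℝ} {ν : Measure ℝ}
    [IsProbabilityMeasure ν]
    (hTM : TraceModel X ξ ν)
    {b1 δ : ℝ} {h : ℝ → ℝ} (hb1 : 0 < b1) (hδ0 : 0 ≤ δ) (hδ1 : δ ≤ 1)
    (hδcdf : δ = cdfOf ν 0)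
    (hν : ν = volume.withDensity fun x => ENNReal.ofReal (h x)) (hh : ∀ x, h x ≤ b1⁻¹)
    (i : Fin n) (A P : Matrix (Fin d1) (Fin d2) ℝ) :
    (∫ ω, (quantLoss δ (ξ i ω + (minner (X i ω) A - minner (X i ω) P))
       - quantLoss δ (ξ i ω + minner (X i ω) A)) ∂ℙ)
      ≤ (24 * frob P ^ 2 + 8 * frob A ^ 2) / b1 := by
  obtain ⟨hprob, hXm, hξm, hind, hgauss, hνmap⟩ := hTM
  haveI := hprob
  have hZind : ∀ e e' : Fin d1 × Fin d2, e ≠ e' →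
      IndepFun (fun ω => X i ω e.1 e.2) (fun ω => X i ω e'.1 e'.2) ℙ := by
    intro e e' hne
    refine hind.indepFun (i := Sum.inl (i, e.1, e.2)) (j := Sum.inl (i, e'.1, e'.2)) ?_
    intro hcon
    apply hne
    simp only [Sum.inl.injEq, Prod.mk.injEq] at hcon
    exact Prod.ext hcon.2.1 hcon.2.2
  have hVξ := indep_V_xi hXm hξm hind i
  have key := sample_bound_abstract (fun (e : Fin d1 × Fin d2) ω => X i ω e.1 e.2) (ξ i) ν
    (fun e => hXm i e.1 e.2) (hξm i) (fun e => hgauss i e.1 e.2) hZind hVξ (hνmap i)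
    hb1 hδ0 hδ1 hδcdf hν hh (fun e => A e.1 e.2) (fun e => P e.1 e.2)
  have hbrA : ∀ ω, (∑ e : Fin d1 × Fin d2, A e.1 e.2 * X i ω e.1 e.2) = minner (X i ω) A :=
    fun ω => minner_sum_prod (X i ω) A
  have hbrP : ∀ ω, (∑ e : Fin d1 × Fin d2, P e.1 e.2 * X i ω e.1 e.2) = minner (X i ω) P :=
    fun ω => minner_sum_prod (X i ω) P
  have hfun : (fun ω => quantLoss δ (ξ i ω +
        ((∑ e : Fin d1 × Fin d2, A e.1 e.2 * X i ω e.1 e.2)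
          - ∑ e : Fin d1 × Fin d2, P e.1 e.2 * X i ω e.1 e.2))
       - quantLoss δ (ξ i ω + ∑ e : Fin d1 × Fin d2, A e.1 e.2 * X i ω e.1 e.2))
      = fun ω => quantLoss δ (ξ i ω + (minner (X i ω) A - minner (X i ω) P))
       - quantLoss δ (ξ i ω + minner (X i ω) A) := by
    funext ω
    rw [hbrA ω, hbrP ω]
  rw [hfun] at key
  refine key.trans (le_of_eq ?_)
  rw [frob_sq_prod, frob_sq_prod]

end MatrixModel

/-- upper bound for sub-gradients of the quantile loss under
heavy-tailed noise III, on the empirical-process event. -/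
theorem statement15 :
    ∀ C1 : ℝ, 0 < C1 →
    ∃ C : ℝ, 0 < C ∧
    ∀ (ε γ δ b0 b1 : ℝ) (ν : Measure ℝ) (h : ℝ → ℝ),
      HeavyTailedIII ν ε γ δ b0 b1 h →
      ∀ (d1 d2 r n : ℕ) (Ω : Type) [MeasureSpace Ω]
        (X : Fin n → Ω → Matrix (Fin d1) (Fin d2) ℝ) (ξ : Fin n → Ω → ℝ)
        (Mstar : Matrix (Fin d1) (Fin d2) ℝ),
        d2 ≤ d1 → 1 ≤ r → Mstar.rank = r →
        TraceModel X ξ ν →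
        ∀ ω : Ω,
          (∀ M M1 : Matrix (Fin d1) (Fin d2) ℝ, M.rank ≤ r → M1.rank ≤ r → M1 ≠ 0 →
            |(quantObj δ (fun i => X i ω) (fun i => obsY X ξ Mstar i ω) (M + M1) -
                quantObj δ (fun i => X i ω) (fun i => obsY X ξ Mstar i ω) M) -
              ((∫ ω', quantObj δ (fun i => X i ω') (fun i => obsY X ξ Mstar i ω') (M + M1) ∂ℙ) -
                (∫ ω', quantObj δ (fun i => X i ω') (fun i => obsY X ξ Mstar i ω') M ∂ℙ))| ≤
              C1 * Real.sqrt ((n : ℝ) * d1 * r) * frob M1) →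
          ∀ M : Matrix (Fin d1) (Fin d2) ℝ, M.rank ≤ r →
            Real.sqrt ((d1 : ℝ) * r / n) * b1 ≤ frob (M - Mstar) →
            ∀ G : Matrix (Fin d1) (Fin d2) ℝ,
              IsSubgradient (quantObj δ (fun i => X i ω) (fun i => obsY X ξ Mstar i ω)) M G →
              truncFrob r G ≤ C * (n : ℝ) / b1 * frob (M - Mstar) := by
  intro C1 hC1
  refine ⟨C1 + 32, by linarith, ?_⟩
  intro ε γ δ b0 b1 ν h hHT d1 d2 r n Ω instΩ X ξ Mstar hd21 hr hrank hTM ω hEvent M hMrank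
    hMfar G hG
  obtain ⟨hνprob, hε, hmom, hδcdf, hδpos, hδlt1, hγ, hb0, hb1, hνdens, hlow, hup⟩ := hHT
  have hTM' := hTM
  obtain ⟨hprob, hXm, hξm, hind, hgauss, hνmap⟩ := hTM'
  haveI := hprob
  haveI := hνprob
  have hδ0 : 0 ≤ δ := hδpos.le
  have hδ1 : δ ≤ 1 := hδlt1.le
  have hDnn : 0 ≤ frob (M - Mstar) := frob_nonneg _
  have h32 : (0:ℝ) < C1 + 32 := by linarith
  have hRHSnn : 0 ≤ (C1 + 32) * (n:ℝ) / b1 * frob (M - Mstar) :=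
    mul_nonneg (div_nonneg (mul_nonneg h32.le (Nat.cast_nonneg n)) hb1.le) (frob_nonneg _)
  apply truncFrob_le G _ hRHSnn
  intro B hB
  have hGB : minner G B = frob B ^ 2 := svd_minner G B hB
  rcases eq_or_lt_of_le (frob_nonneg B) with hB0 | hBpos
  · rw [← hB0]; exact hRHSnn
  have hd2pos : 1 ≤ d2 := by
    have hw := Matrix.rank_le_width Mstar
    omega
  have hd1pos : 1 ≤ d1 := le_trans hd2pos hd21
  rcases eq_or_lt_of_le hDnn with hD0 | hDpos
  · -- degenerate case: M = Mstar, forces n = 0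
    have hn0 : n = 0 := by
      by_contra hn
      have hnR : (0:ℝ) < n := by
        have h1 : 1 ≤ n := Nat.one_le_iff_ne_zero.mpr hn
        exact_mod_cast Nat.lt_of_lt_of_le Nat.zero_lt_one h1
      have hd1r : (0:ℝ) < (d1:ℝ) * r / n := by
        apply div_pos _ hnR
        have h1 : (0:ℝ) < d1 := by exact_mod_cast hd1pos
        have h2 : (0:ℝ) < r := by exact_mod_cast hr
        exact mul_pos h1 h2
      have hpos : 0 < Real.sqrt ((d1:ℝ) * r / n) * b1 :=
        mul_pos (Real.sqrt_pos.mpr hd1r) hb1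
      linarith [hMfar]
    subst hn0
    exfalso
    have hsub := hG (M + B)
    have hq0 : ∀ N : Matrix (Fin d1) (Fin d2) ℝ,
        quantObj δ (fun i => X i ω) (fun i => obsY X ξ Mstar i ω) N = 0 := by
      intro N; simp [quantObj]
    rw [hq0 M, hq0 (M + B), add_sub_cancel_left] at hsub
    nlinarith [hGB, hsub, hBpos]
  · -- main case
    set D := frob (M - Mstar) with hD
    set M1 : Matrix (Fin d1) (Fin d2) ℝ := (D / frob B) • B with hM1
    have hfM1 : frob M1 = D := by
      rw [hM1, frob_smul, abs_of_pos (div_pos hDpos hBpos), div_mul_cancel₀ _ (ne_of_gt hBpos)]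
    have hM1rank : M1.rank ≤ r := rank_smul_le _ _ hB.1
    have hM1ne : M1 ≠ 0 := by
      intro hcon
      rw [hcon, (frob_eq_zero_iff (0 : Matrix (Fin d1) (Fin d2) ℝ)).mpr rfl] at hfM1
      linarith
    have hEv := hEvent M M1 hMrank hM1rank hM1ne
    have hsub := hG (M + M1)
    rw [add_sub_cancel_left] at hsub
    have hBne : frob B ≠ 0 := ne_of_gt hBpos
    have hGm1 : minner G M1 = D * frob B := by
      rw [hM1, minner_smul_right, hGB]
      field_simp
    -- integrability of the noise
    have hξint : ∀ i, Integrable (ξ i) ℙ := by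
      have hid_ν : Integrable (fun x : ℝ => x) ν := by
        refine Integrable.mono' ((integrable_const (1:ℝ)).add hmom)
          measurable_id.aestronglyMeasurable (ae_of_all _ fun x => ?_)
        rw [Real.norm_eq_abs]
        simp only [Pi.add_apply]
        rcases le_total |x| 1 with hx | hx
        · have h0 : (0:ℝ) ≤ |x| ^ (1 + ε) := Real.rpow_nonneg (abs_nonneg x) _
          linarith
        · have h2 : |x| ^ (1:ℝ) ≤ |x| ^ (1 + ε) :=
            Real.rpow_le_rpow_of_exponent_le hx (by linarith)
          rw [Real.rpow_one] at h2
          linarith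
      intro i
      exact (integrable_map_measure aestronglyMeasurable_id (hξm i).aemeasurable).mp
        (by rw [hνmap i]; exact hid_ν)
    have hZind : ∀ i : Fin n, ∀ e e' : Fin d1 × Fin d2, e ≠ e' →
        IndepFun (fun ω' => X i ω' e.1 e.2) (fun ω' => X i ω' e'.1 e'.2) ℙ := by
      intro i e e' hne
      refine hind.indepFun (i := Sum.inl (i, e.1, e.2)) (j := Sum.inl (i, e'.1, e'.2)) ?_
      intro hcon
      apply hne
      simp only [Sum.inl.injEq, Prod.mk.injEq] at hcon
      exact Prod.ext hcon.2.1 hcon.2.2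
    have hXmom := fun (i : Fin n) (Q : Matrix (Fin d1) (Fin d2) ℝ) =>
      minner_X_moment (X i) (fun a b => hXm i a b) (fun a b => hgauss i a b) (hZind i) Q
    have harg : ∀ (N : Matrix (Fin d1) (Fin d2) ℝ) (i : Fin n) (ω' : Ω),
        obsY X ξ Mstar i ω' - minner N (X i ω') = ξ i ω' + minner (X i ω') (Mstar - N) := by
      intro N i ω'
      rw [obsY, minner_sub_right, minner_comm N]
      ring
    have hterm : ∀ (N : Matrix (Fin d1) (Fin d2) ℝ) (i : Fin n), Integrable
        (fun ω' => quantLoss δ (obsY X ξ Mstar i ω' - minner N (X i ω'))) ℙ := by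
      intro N i
      have hdom : Integrable (fun ω' => |ξ i ω'| + |minner (X i ω') (Mstar - N)|) ℙ :=
        (hξint i).abs.add (hXmom i (Mstar - N)).2.1.abs
      refine Integrable.mono' hdom ?_ (ae_of_all _ fun ω' => ?_)
      · apply Measurable.aestronglyMeasurable
        apply (measurable_quantLoss δ).comp
        have h1 : Measurable (fun ω' => obsY X ξ Mstar i ω') := (hXmom i Mstar).1.add (hξm i)
        have h2 : Measurable (fun ω' => minner N (X i ω')) := by
          have hc : (fun ω' => minner N (X i ω')) = fun ω' => minner (X i ω') N :=
            funext fun ω' => minner_comm _ _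
          rw [hc]
          exact (hXmom i N).1
        exact h1.sub h2
      · rw [Real.norm_eq_abs]
        calc |quantLoss δ (obsY X ξ Mstar i ω' - minner N (X i ω'))|
            ≤ |obsY X ξ Mstar i ω' - minner N (X i ω')| := abs_quantLoss_le hδ0 hδ1 _
          _ = |ξ i ω' + minner (X i ω') (Mstar - N)| := by rw [harg]
          _ ≤ |ξ i ω'| + |minner (X i ω') (Mstar - N)| := abs_add_le _ _
    have hEint : ∀ N : Matrix (Fin d1) (Fin d2) ℝ,
        (∫ ω', quantObj δ (fun i => X i ω') (fun i => obsY X ξ Mstar i ω') N ∂ℙ)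
        = ∑ i, ∫ ω', quantLoss δ (obsY X ξ Mstar i ω' - minner N (X i ω')) ∂ℙ := by
      intro N
      exact integral_finset_sum _ fun i _ => hterm N i
    have hperi : ∀ i : Fin n,
        (∫ ω', (quantLoss δ (obsY X ξ Mstar i ω' - minner (M + M1) (X i ω'))
          - quantLoss δ (obsY X ξ Mstar i ω' - minner M (X i ω'))) ∂ℙ)
          ≤ 32 * D ^ 2 / b1 := by
      intro i
      have hre : (fun ω' => quantLoss δ (obsY X ξ Mstar i ω' - minner (M + M1) (X i ω'))
          - quantLoss δ (obsY X ξ Mstar i ω' - minner M (X i ω')))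
          = fun ω' => quantLoss δ (ξ i ω'
              + (minner (X i ω') (Mstar - M) - minner (X i ω') M1))
            - quantLoss δ (ξ i ω' + minner (X i ω') (Mstar - M)) := by
        funext ω'
        rw [harg (M + M1) i ω', harg M i ω', sub_add_eq_sub_sub, minner_sub_right]
      rw [hre]
      have hsb := sample_bound hTM hb1 hδ0 hδ1 hδcdf hνdens hup i (Mstar - M) M1
      refine hsb.trans ?_
      have hfA : frob (Mstar - M) = D := by rw [frob_sub_comm, ← hD]
      rw [hfA, hfM1]
      have he : 24 * D ^ 2 + 8 * D ^ 2 = 32 * D ^ 2 := by ring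
      rw [he]
    have hEΔ : (∫ ω', quantObj δ (fun i => X i ω') (fun i => obsY X ξ Mstar i ω') (M + M1) ∂ℙ)
        - (∫ ω', quantObj δ (fun i => X i ω') (fun i => obsY X ξ Mstar i ω') M ∂ℙ)
        ≤ (n:ℝ) * (32 * D ^ 2 / b1) := by
      rw [hEint (M + M1), hEint M, ← Finset.sum_sub_distrib]
      calc (∑ i : Fin n, ((∫ ω', quantLoss δ (obsY X ξ Mstar i ω' - minner (M + M1) (X i ω')) ∂ℙ)
            - ∫ ω', quantLoss δ (obsY X ξ Mstar i ω' - minner M (X i ω')) ∂ℙ))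
          ≤ ∑ _i : Fin n, 32 * D ^ 2 / b1 := by
            refine Finset.sum_le_sum fun i _ => ?_
            exact le_trans (le_of_eq (integral_sub (hterm (M + M1) i) (hterm M i)).symm) (hperi i)
        _ = (n:ℝ) * (32 * D ^ 2 / b1) := by
            rw [Finset.sum_const, Finset.card_univ, Fintype.card_fin, nsmul_eq_mul]
    have hsqrt : Real.sqrt ((n:ℝ) * d1 * r) ≤ (n:ℝ) / b1 * D := by
      rcases Nat.eq_zero_or_pos n with hn | hn
      · subst hn
        simp
      · have hnR : (0:ℝ) < n := by exact_mod_cast hn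
        have h2 : (n:ℝ) ^ 2 * ((d1:ℝ) * r / n) = (n:ℝ) * d1 * r := by field_simp
        have h1 : Real.sqrt ((n:ℝ) ^ 2 * ((d1:ℝ) * r / n))
            = (n:ℝ) * Real.sqrt ((d1:ℝ) * r / n) := by
          rw [Real.sqrt_mul (sq_nonneg _), Real.sqrt_sq hnR.le]
        calc Real.sqrt ((n:ℝ) * d1 * r) = (n:ℝ) * Real.sqrt ((d1:ℝ) * r / n) := by
              rw [← h2, h1]
          _ = (n:ℝ) / b1 * (Real.sqrt ((d1:ℝ) * r / n) * b1) := by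
              rw [mul_comm (Real.sqrt ((d1:ℝ) * r / n)) b1, ← mul_assoc,
                div_mul_cancel₀ _ (ne_of_gt hb1)]
          _ ≤ (n:ℝ) / b1 * D := by
              apply mul_le_mul_of_nonneg_left hMfar (by positivity)
    have hΔle : quantObj δ (fun i => X i ω) (fun i => obsY X ξ Mstar i ω) (M + M1)
        - quantObj δ (fun i => X i ω) (fun i => obsY X ξ Mstar i ω) M
        ≤ (n:ℝ) * (32 * D ^ 2 / b1) + C1 * Real.sqrt ((n:ℝ) * d1 * r) * frob M1 := by
      have h1 := (abs_le.mp hEv).2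
      linarith [hEΔ]
    have hkey : D * frob B ≤ (n:ℝ) * (32 * D ^ 2 / b1) + C1 * ((n:ℝ) / b1 * D) * D := by
      have h2 : minner G M1 ≤ quantObj δ (fun i => X i ω) (fun i => obsY X ξ Mstar i ω) (M + M1)
          - quantObj δ (fun i => X i ω) (fun i => obsY X ξ Mstar i ω) M := by linarith [hsub]
      rw [hGm1] at h2
      have h3 : C1 * Real.sqrt ((n:ℝ) * d1 * r) * frob M1 ≤ C1 * ((n:ℝ) / b1 * D) * D := by
        rw [hfM1]
        exact mul_le_mul_of_nonneg_right (mul_le_mul_of_nonneg_left hsqrt hC1.le) hDpos.le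
      linarith [hΔle]
    have hfin : D * frob B ≤ D * ((C1 + 32) * (n:ℝ) / b1 * D) := by
      have he : D * ((C1 + 32) * (n:ℝ) / b1 * D)
          = (n:ℝ) * (32 * D ^ 2 / b1) + C1 * ((n:ℝ) / b1 * D) * D := by
        field_simp
        ring
      linarith [hkey]
    exact le_of_mul_le_mul_left hfin hDpos

end Paper
end
end

section
/- Suppose ξ, ξ₁, ξ₂, …, ξ_n are i.i.d. random variables and there exists ε > 0 such that E|ξ|^{1+ε} < +∞. Then (1/n) Σ_{i=1}^n |ξ_i| ≤ 3 E|ξ| with probability at least 1 − c n^{−min{ε,1}}, where c > 0 is a constant depending only on E|ξ| and E|ξ|^{1+ε}. -/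
open MeasureTheory ProbabilityTheory Matrix Real Set
open scoped ENNReal NNReal ProbabilityTheory

noncomputable section

namespace Paper

private lemma markov_ofReal {α : Type*} [MeasurableSpace α] {μ : Measure α} [IsFiniteMeasure μ]
    {f : α → ℝ} (hf_nonneg : 0 ≤ᵐ[μ] f) (hf : Integrable f μ) {t : ℝ} (ht : 0 < t) :
    μ {x | t ≤ f x} ≤ ENNReal.ofReal ((∫ x, f x ∂μ) / t) := by
  have h := mul_meas_ge_le_integral_of_nonneg hf_nonneg hf t
  rw [← ENNReal.ofReal_toReal (measure_ne_top μ {x | t ≤ f x})]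
  exact ENNReal.ofReal_le_ofReal (by rw [le_div_iff₀ ht, mul_comm]; exact h)

private lemma key_arith (a A G B K : ℝ) (ha : 0 < a) (hA : 0 < A) (hG : 0 < G) (hB : 0 < B)
    (hK : 0 ≤ K) :
    a * (K / (a * A * (G * B))) + a * (a * G / (A * B) * K) / (2 * a * G) ^ 2 ≤
      (2 * (K + 1) * (G * B)⁻¹ + 1) * A⁻¹ := by
  have hD : 0 < A * (G * B) := by positivity
  have h1 : a * (K / (a * A * (G * B))) = K / (A * (G * B)) := by
    field_simp
  have h2 : a * (a * G / (A * B) * K) / (2 * a * G) ^ 2 = K / (4 * (A * (G * B))) := by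
    field_simp; ring
  have h3 : (2 * (K + 1) * (G * B)⁻¹ + 1) * A⁻¹ = 2 * (K + 1) / (A * (G * B)) + A⁻¹ := by
    field_simp
  rw [h1, h2, h3]
  have h4 : K / (A * (G * B)) + K / (4 * (A * (G * B))) ≤ 2 * (K + 1) / (A * (G * B)) := by
    rw [div_add_div _ _ (ne_of_gt hD) (by positivity), div_le_div_iff₀ (by positivity) hD]
    nlinarith [mul_nonneg hK (mul_pos hD hD).le, mul_pos hD hD]
  have h5 : (0:ℝ) ≤ A⁻¹ := by positivity
  linarith

/-- contraction of heavy-tailed random variables. -/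
theorem statement19 :
    ∀ (ε : ℝ), 0 < ε →
    ∀ (ν : Measure ℝ), IsProbabilityMeasure ν →
    Integrable (fun x => |x| ^ (1 + ε)) ν →
    ∃ c : ℝ, 0 < c ∧
      ∀ (n : ℕ) (Ω : Type) [MeasureSpace Ω],
        IsProbabilityMeasure (ℙ : Measure Ω) →
        ∀ ξ : Fin n → Ω → ℝ,
          (∀ i, Measurable (ξ i)) →
          iIndepFun ξ ℙ →
          (∀ i, Measure.map (ξ i) ℙ = ν) →
          ENNReal.ofReal (1 - c * (n : ℝ) ^ (-(min ε 1))) ≤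
            ℙ {ω | (1 / (n : ℝ)) * ∑ i, |ξ i ω| ≤ 3 * ∫ x, |x| ∂ν} := by
  intro ε hε ν hν hint
  have he0 : 0 < min ε 1 := lt_min hε one_pos
  have he1 : min ε 1 ≤ 1 := min_le_right ε 1
  have heε : min ε 1 ≤ ε := min_le_left ε 1
  set e : ℝ := min ε 1 with he_def
  -- integrability of powers
  have hgi : Integrable (fun x : ℝ => 1 + |x| ^ (1 + ε)) ν := (integrable_const 1).add hint
  have hdom : ∀ q : ℝ, 0 ≤ q → q ≤ 1 + ε → Integrable (fun x : ℝ => |x| ^ q) ν := by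
    intro q hq hqe
    have hmq : Measurable fun x : ℝ => |x| ^ q :=
      ((Real.continuous_rpow_const hq).comp continuous_abs).measurable
    refine hgi.mono' hmq.aestronglyMeasurable (Filter.Eventually.of_forall fun x => ?_)
    rw [Real.norm_eq_abs, abs_of_nonneg (Real.rpow_nonneg (abs_nonneg x) q)]
    rcases le_total |x| 1 with h | h
    · have h1 := Real.rpow_le_one (abs_nonneg x) h hq
      have h2 := Real.rpow_nonneg (abs_nonneg x) (1 + ε)
      linarith
    · have h1 := Real.rpow_le_rpow_of_exponent_le h hqe
      linarith
  have hKint : Integrable (fun x : ℝ => |x| ^ (1 + e)) ν :=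
    hdom (1 + e) (by linarith) (by linarith)
  have hγint : Integrable (fun x : ℝ => |x|) ν := by
    have := hdom 1 zero_le_one (by linarith)
    simpa [Real.rpow_one] using this
  set K : ℝ := ∫ x, |x| ^ (1 + e) ∂ν with hK_def
  set γ : ℝ := ∫ x, |x| ∂ν with hγ_def
  have hK0 : 0 ≤ K := integral_nonneg fun x => Real.rpow_nonneg (abs_nonneg x) _
  have hγ0 : 0 ≤ γ := integral_nonneg fun x => abs_nonneg x
  have h1 : 0 ≤ 2 * (K + 1) * (γ ^ (1 + e))⁻¹ :=
    mul_nonneg (by linarith) (inv_nonneg.2 (Real.rpow_nonneg hγ0 _))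
  have hc0 : 0 < 2 * (K + 1) * (γ ^ (1 + e))⁻¹ + 1 := by linarith
  set c : ℝ := 2 * (K + 1) * (γ ^ (1 + e))⁻¹ + 1 with hc_def
  refine ⟨c, hc0, ?_⟩
  intro n Ω _ hΩ ξ hmeas hind hmap
  rcases Nat.eq_zero_or_pos n with hn | hn
  · subst hn
    have h1 : {ω : Ω | (1 / ((0 : ℕ) : ℝ)) * ∑ i : Fin 0, |ξ i ω| ≤ 3 * γ} = Set.univ := by
      refine Set.eq_univ_of_forall fun ω => ?_
      simp only [Set.mem_setOf_eq, Finset.univ_eq_empty, Finset.sum_empty, mul_zero]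
      linarith
    rw [h1, measure_univ, Nat.cast_zero, Real.zero_rpow (neg_ne_zero.mpr he0.ne'), mul_zero,
      sub_zero, ENNReal.ofReal_one]
  · have npos : (0 : ℝ) < (n : ℝ) := by exact_mod_cast hn
    have hne : (0 : ℝ) < (n : ℝ) ^ e := Real.rpow_pos_of_pos npos e
    have hnneg0 : (0 : ℝ) ≤ (n : ℝ) ^ (-e) := Real.rpow_nonneg npos.le _
    have hSmeas : MeasurableSet {ω : Ω | (1 / (n : ℝ)) * ∑ i, |ξ i ω| ≤ 3 * γ} := by
      exact measurableSet_le
        (measurable_const.mul (Finset.measurable_sum _ fun i _ => (hmeas i).abs))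
        measurable_const
    rcases eq_or_lt_of_le hγ0 with hγ | hγ
    · -- degenerate case γ = 0 : all ξ i vanish a.s.
      have hae : ∀ᵐ x ∂ν, |x| = 0 := by
        have h0 := (integral_eq_zero_iff_of_nonneg (fun x => abs_nonneg x) hγint).mp hγ.symm
        filter_upwards [h0] with x hx using hx
      have hae' : ∀ i, ∀ᵐ ω ∂(ℙ : Measure Ω), |ξ i ω| = 0 := by
        intro i
        have h1 : ∀ᵐ x ∂(Measure.map (ξ i) ℙ), |x| = 0 := by rw [hmap i]; exact hae
        have hms : MeasurableSet {x : ℝ | |x| = 0} :=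
          measurable_abs (measurableSet_singleton 0)
        exact (MeasureTheory.ae_map_iff (hmeas i).aemeasurable hms).mp h1
      have hS1 : ∀ᵐ ω ∂(ℙ : Measure Ω),
          ω ∈ {ω : Ω | (1 / (n : ℝ)) * ∑ i, |ξ i ω| ≤ 3 * γ} := by
        filter_upwards [MeasureTheory.ae_all_iff.2 hae'] with ω hω
        have hsum : ∑ i, |ξ i ω| = 0 := Finset.sum_eq_zero fun i _ => hω i
        simp only [Set.mem_setOf_eq, hsum, mul_zero]
        linarith
      have hP1 : ℙ {ω : Ω | (1 / (n : ℝ)) * ∑ i, |ξ i ω| ≤ 3 * γ} = 1 := by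
        rw [← prob_compl_eq_zero_iff₀ hSmeas.nullMeasurableSet]
        exact MeasureTheory.ae_iff.mp hS1
      rw [hP1]
      refine ENNReal.ofReal_le_one.mpr ?_
      nlinarith [mul_nonneg hc0.le hnneg0]
    · -- main case γ > 0
      set t : ℝ := (n : ℝ) * γ with ht_def
      have ht : 0 < t := mul_pos npos hγ
      set g : ℝ → ℝ := fun x => min |x| t with hg_def
      have hgmeas : Measurable g := measurable_abs.min measurable_const
      have hg0 : ∀ x, 0 ≤ g x := fun x => le_min (abs_nonneg x) ht.le
      have hgle : ∀ x, g x ≤ |x| := fun x => min_le_left _ _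
      have hglet : ∀ x, g x ≤ t := fun x => min_le_right _ _
      set Y : Fin n → Ω → ℝ := fun i ω => g (ξ i ω) with hY_def
      have hYmeas : ∀ i, Measurable (Y i) := fun i => hgmeas.comp (hmeas i)
      have hYL2 : ∀ i, MemLp (Y i) 2 ℙ := fun i =>
        MemLp.of_bound (hYmeas i).aestronglyMeasurable t
          (Filter.Eventually.of_forall fun ω => by
            rw [Real.norm_eq_abs, abs_of_nonneg (hg0 _)]; exact hglet _)
      have hmapY : ∀ (φ : ℝ → ℝ), Measurable φ → ∀ i,
          ∫ ω, φ (ξ i ω) ∂(ℙ : Measure Ω) = ∫ x, φ x ∂ν := by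
        intro φ hφ i
        rw [← hmap i]
        exact (integral_map (hmeas i).aemeasurable hφ.aestronglyMeasurable).symm
      have hEY : ∀ i, ∫ ω, Y i ω ∂(ℙ : Measure Ω) = ∫ x, g x ∂ν := fun i => hmapY g hgmeas i
      have hgint : Integrable g ν := by
        refine hγint.mono' hgmeas.aestronglyMeasurable (Filter.Eventually.of_forall fun x => ?_)
        rw [Real.norm_eq_abs, abs_of_nonneg (hg0 x)]; exact hgle x
      have hEg : ∫ x, g x ∂ν ≤ γ := integral_mono hgint hγint hgle
      -- second moment bound
      have hg2pt : ∀ x, g x ^ 2 ≤ t ^ (1 - e) * |x| ^ (1 + e) := by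
        intro x
        rcases eq_or_lt_of_le (hg0 x) with h0 | h0
        · rw [← h0]
          have := mul_nonneg (Real.rpow_nonneg ht.le (1 - e))
            (Real.rpow_nonneg (abs_nonneg x) (1 + e))
          nlinarith
        · have h2 : g x ^ 2 = g x ^ ((1 - e) + (1 + e) : ℝ) := by
            rw [show ((1 - e) + (1 + e) : ℝ) = ((2 : ℕ) : ℝ) by push_cast; ring,
              Real.rpow_natCast]
          rw [h2, Real.rpow_add h0]
          exact mul_le_mul (Real.rpow_le_rpow (hg0 x) (hglet x) (by linarith))
            (Real.rpow_le_rpow (hg0 x) (hgle x) (by linarith))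
            (Real.rpow_nonneg (hg0 x) _) (Real.rpow_nonneg ht.le _)
      have hg2int : Integrable (fun x => g x ^ 2) ν := by
        refine (integrable_const (t ^ 2)).mono'
          ((hgmeas.pow_const 2).aestronglyMeasurable) (Filter.Eventually.of_forall fun x => ?_)
        rw [Real.norm_eq_abs, abs_of_nonneg (sq_nonneg _)]
        exact pow_le_pow_left₀ (hg0 x) (hglet x) 2
      have hEg2 : ∫ x, g x ^ 2 ∂ν ≤ t ^ (1 - e) * K := by
        calc ∫ x, g x ^ 2 ∂ν ≤ ∫ x, t ^ (1 - e) * |x| ^ (1 + e) ∂ν :=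
              integral_mono hg2int (hKint.const_mul _) hg2pt
          _ = t ^ (1 - e) * K := integral_const_mul _ _
      have hVar : ∀ i, variance (Y i) ℙ ≤ t ^ (1 - e) * K := by
        intro i
        refine le_trans (variance_le_expectation_sq (hYmeas i).aestronglyMeasurable) ?_
        have h1 : (ℙ : Measure Ω)[(Y i) ^ 2] = ∫ x, g x ^ 2 ∂ν := by
          simp only [Pi.pow_apply]
          exact hmapY (fun x => g x ^ 2) (hgmeas.pow_const 2) i
        rw [h1]; exact hEg2
      have hYind : iIndepFun Y ℙ :=
        hind.comp (fun _ => g) (fun _ => hgmeas)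
      set SY : Ω → ℝ := ∑ i, Y i with hSY_def
      have hSYL2 : MemLp SY 2 ℙ := memLp_finset_sum' _ fun i _ => hYL2 i
      have hVarSY : variance SY ℙ ≤ (n : ℝ) * (t ^ (1 - e) * K) := by
        rw [hSY_def, IndepFun.variance_sum (fun i _ => hYL2 i)
          (fun i _ j _ hij => hYind.indepFun hij)]
        calc ∑ i : Fin n, variance (Y i) ℙ ≤ ∑ _i : Fin n, t ^ (1 - e) * K :=
              Finset.sum_le_sum fun i _ => hVar i
          _ = (n : ℝ) * (t ^ (1 - e) * K) := by
              rw [Finset.sum_const, Finset.card_univ, Fintype.card_fin, nsmul_eq_mul]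
      have hESY : (ℙ : Measure Ω)[SY] ≤ (n : ℝ) * γ := by
        have h1 : (ℙ : Measure Ω)[SY] = ∑ _i : Fin n, ∫ x, g x ∂ν := by
          have h2 : (ℙ : Measure Ω)[SY] = ∫ ω, ∑ i, Y i ω ∂(ℙ : Measure Ω) := by
            simp only [hSY_def, Finset.sum_apply]
          rw [h2, integral_finset_sum _ fun i _ => (hYL2 i).integrable one_le_two]
          exact Finset.sum_congr rfl fun i _ => hEY i
        rw [h1, Finset.sum_const, Finset.card_univ, Fintype.card_fin, nsmul_eq_mul]
        exact mul_le_mul_of_nonneg_left hEg npos.le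
      -- Chebyshev
      have hcheb : ℙ {ω | 2 * (n : ℝ) * γ ≤ |SY ω - (ℙ : Measure Ω)[SY]|} ≤
          ENNReal.ofReal (((n : ℝ) * (t ^ (1 - e) * K)) / (2 * (n : ℝ) * γ) ^ 2) := by
        refine le_trans (meas_ge_le_variance_div_sq hSYL2 (by positivity)) ?_
        apply ENNReal.ofReal_le_ofReal
        gcongr
      -- tails
      have htail : ∀ i, ℙ {ω | t < |ξ i ω|} ≤ ENNReal.ofReal (K / t ^ (1 + e)) := by
        intro i
        have hsub : {ω : Ω | t < |ξ i ω|} ⊆ {ω : Ω | t ^ (1 + e) ≤ |ξ i ω| ^ (1 + e)} :=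
          fun ω hω => Real.rpow_le_rpow ht.le (le_of_lt hω) (by linarith)
        refine le_trans (measure_mono hsub) ?_
        have hms : MeasurableSet {x : ℝ | t ^ (1 + e) ≤ |x| ^ (1 + e)} :=
          measurableSet_le measurable_const
            ((Real.continuous_rpow_const (by linarith)).comp continuous_abs).measurable
        have heq : {ω : Ω | t ^ (1 + e) ≤ |ξ i ω| ^ (1 + e)} =
            (ξ i) ⁻¹' {x : ℝ | t ^ (1 + e) ≤ |x| ^ (1 + e)} := rfl
        rw [heq, ← Measure.map_apply (hmeas i) hms, hmap i]
        exact markov_ofReal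
          (Filter.Eventually.of_forall fun x => Real.rpow_nonneg (abs_nonneg x) _)
          hKint (Real.rpow_pos_of_pos ht _)
      have hunion : ℙ (⋃ i, {ω : Ω | t < |ξ i ω|}) ≤
          ENNReal.ofReal ((n : ℝ) * (K / t ^ (1 + e))) := by
        refine le_trans (measure_iUnion_fintype_le _ _) ?_
        calc ∑ i : Fin n, ℙ {ω : Ω | t < |ξ i ω|}
            ≤ ∑ _i : Fin n, ENNReal.ofReal (K / t ^ (1 + e)) :=
              Finset.sum_le_sum fun i _ => htail i
          _ = (n : ℝ≥0∞) * ENNReal.ofReal (K / t ^ (1 + e)) := by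
              rw [Finset.sum_const, Finset.card_univ, Fintype.card_fin, nsmul_eq_mul]
          _ = ENNReal.ofReal ((n : ℝ) * (K / t ^ (1 + e))) := by
              rw [ENNReal.ofReal_mul (Nat.cast_nonneg n), ENNReal.ofReal_natCast]
      -- inclusion of the bad event
      have hincl : {ω : Ω | (1 / (n : ℝ)) * ∑ i, |ξ i ω| ≤ 3 * γ}ᶜ ⊆
          (⋃ i, {ω : Ω | t < |ξ i ω|}) ∪
            {ω | 2 * (n : ℝ) * γ ≤ |SY ω - (ℙ : Measure Ω)[SY]|} := by
        intro ω hω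
        simp only [Set.mem_compl_iff, Set.mem_setOf_eq, not_le] at hω
        by_cases hb : ∃ i, t < |ξ i ω|
        · obtain ⟨i, hi⟩ := hb
          exact Or.inl (Set.mem_iUnion.2 ⟨i, hi⟩)
        · push_neg at hb
          have hYeq : ∀ i, Y i ω = |ξ i ω| := fun i => min_eq_left (hb i)
          have hSYω : SY ω = ∑ i, |ξ i ω| := by
            simp only [hSY_def, Finset.sum_apply]
            exact Finset.sum_congr rfl fun i _ => hYeq i
          have hsum : 3 * ((n : ℝ) * γ) < ∑ i, |ξ i ω| := by
            have h2 := mul_lt_mul_of_pos_left hω npos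
            have h3 : (n : ℝ) * (1 / (n : ℝ) * ∑ i, |ξ i ω|) = ∑ i, |ξ i ω| := by
              field_simp
            rw [h3] at h2
            linarith
          refine Or.inr ?_
          have h4 : 2 * (n : ℝ) * γ ≤ SY ω - (ℙ : Measure Ω)[SY] := by
            rw [hSYω]; linarith [hESY]
          exact le_trans h4 (le_abs_self _)
      -- combine
      have hbad : ℙ ({ω : Ω | (1 / (n : ℝ)) * ∑ i, |ξ i ω| ≤ 3 * γ}ᶜ) ≤
          ENNReal.ofReal (c * (n : ℝ) ^ (-e)) := by
        refine le_trans (measure_mono hincl) (le_trans (measure_union_le _ _) ?_)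
        refine le_trans (add_le_add hunion hcheb) ?_
        rw [← ENNReal.ofReal_add
          (mul_nonneg npos.le (div_nonneg hK0 (Real.rpow_nonneg ht.le _)))
          (div_nonneg (mul_nonneg npos.le (mul_nonneg (Real.rpow_nonneg ht.le _) hK0))
            (sq_nonneg _))]
        apply ENNReal.ofReal_le_ofReal
        -- real arithmetic
        have hBe : (0 : ℝ) < γ ^ e := Real.rpow_pos_of_pos hγ e
        have ht1 : t ^ (1 + e) = ((n : ℝ) * (n : ℝ) ^ e) * (γ * γ ^ e) := by
          rw [ht_def, Real.mul_rpow npos.le hγ.le, Real.rpow_add npos, Real.rpow_one,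
            Real.rpow_add hγ, Real.rpow_one]
        have ht2 : t ^ (1 - e) = ((n : ℝ) * γ) / ((n : ℝ) ^ e * γ ^ e) := by
          rw [ht_def, Real.mul_rpow npos.le hγ.le, Real.rpow_sub npos, Real.rpow_sub hγ,
            Real.rpow_one, Real.rpow_one]
          field_simp
        have hγ1e : γ ^ (1 + e) = γ * γ ^ e := by
          rw [Real.rpow_add hγ, Real.rpow_one]
        have hnege : (n : ℝ) ^ (-e) = ((n : ℝ) ^ e)⁻¹ := Real.rpow_neg npos.le e
        rw [ht1, ht2, hnege, hc_def, hγ1e]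
        exact key_arith (n : ℝ) ((n : ℝ) ^ e) γ (γ ^ e) K npos hne hγ hBe hK0
      -- finish
      rw [ENNReal.ofReal_sub _ (mul_nonneg hc0.le hnneg0), ENNReal.ofReal_one,
        tsub_le_iff_right]
      calc (1 : ℝ≥0∞) = ℙ (Set.univ : Set Ω) := measure_univ.symm
        _ = ℙ ({ω : Ω | (1 / (n : ℝ)) * ∑ i, |ξ i ω| ≤ 3 * γ} ∪
              {ω : Ω | (1 / (n : ℝ)) * ∑ i, |ξ i ω| ≤ 3 * γ}ᶜ) := by
              rw [Set.union_compl_self]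
        _ ≤ ℙ {ω : Ω | (1 / (n : ℝ)) * ∑ i, |ξ i ω| ≤ 3 * γ} +
              ℙ ({ω : Ω | (1 / (n : ℝ)) * ∑ i, |ξ i ω| ≤ 3 * γ}ᶜ) := measure_union_le _ _
        _ ≤ _ := add_le_add_right hbad _

end Paper
end
end
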